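/- arXiv:math/0508321 — 2 statements merged into one kernel-verified Lean document; each statement's English description precedes it below -/
import Mathlib

section
/- Let G be a finitely generated group and let H be a subgroup of G of finite index. If H has uniformly exponential growth, then G has uniformly exponential growth. -/
open Filter

variable {G : Type*} [Group G]

noncomputable def wordLength (S : Set G) (g : G) : ℕ :=
  sInf {k | ∃ w : List G, w.length = k ∧ (∀ x ∈ w, x ∈ S ∨ x⁻¹ ∈ S) ∧ w.prod = g}

noncomputable def ballCard (S : Set G) (n : ℕ) : ℕ :=
  Set.ncard {g : G | wordLength S g ≤ n}

noncomputable def growthRate (S : Set G) : ℝ :=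
  limUnder atTop (fun n : ℕ => (ballCard S n : ℝ) ^ ((n : ℝ)⁻¹))

noncomputable def minGrowth (G : Type*) [Group G] : ℝ :=
  sInf {x : ℝ | ∃ S : Finset G, Subgroup.closure (S : Set G) = ⊤ ∧ growthRate (S : Set G) = x}

/-! Every right coset of `H` contains an element of `S`-length less than `[G : H]`: the shortest
lengths of the cosets form an initial segment of `ℕ`, since deleting the last letter of a shortest
word moves to a coset whose shortest length is one less. Schreier's lemma applied to these short
representatives gives generators of `H` of `S`-length at most `d = 2 [G : H]`, so the `n`-ball of `H`
embeds in the `d n`-ball of `G` and `ω(G, S) ≥ ω(H) ^ (1 / d)` for every generating set `S` of `G`.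
The growth rates exist by Fekete's lemma, ball sizes being submultiplicative. -/

open Topology Pointwise

section WordLength

variable {S : Set G}

theorem wordLength_le_length {g : G} {w : List G} (hw : ∀ x ∈ w, x ∈ S ∨ x⁻¹ ∈ S)
    (hg : w.prod = g) : wordLength S g ≤ w.length :=
  Nat.sInf_le ⟨w, rfl, hw, hg⟩

theorem exists_list_length_eq_wordLength (hS : Subgroup.closure S = ⊤) (g : G) :
    ∃ w : List G, w.length = wordLength S g ∧ (∀ x ∈ w, x ∈ S ∨ x⁻¹ ∈ S) ∧ w.prod = g := by
  have hg : g ∈ (Subgroup.closure S).toSubmonoid := hS ▸ Subgroup.mem_top g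
  rw [Subgroup.closure_toSubmonoid] at hg
  obtain ⟨w, hw, hwg⟩ := Submonoid.exists_list_of_mem_closure hg
  exact Nat.sInf_mem (s := {k | ∃ w : List G, w.length = k ∧ (∀ x ∈ w, x ∈ S ∨ x⁻¹ ∈ S) ∧
    w.prod = g}) ⟨w.length, w, rfl, hw, hwg⟩

theorem wordLength_one : wordLength S (1 : G) = 0 :=
  Nat.le_zero.mp (wordLength_le_length (w := []) (by simp) rfl)

theorem eq_one_of_wordLength_eq_zero (hS : Subgroup.closure S = ⊤) {g : G}
    (hg : wordLength S g = 0) : g = 1 := by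
  obtain ⟨w, hlen, -, rfl⟩ := exists_list_length_eq_wordLength hS g
  rw [List.length_eq_zero_iff.mp (hlen.trans hg), List.prod_nil]

theorem wordLength_le_one {s : G} (hs : s ∈ S ∨ s⁻¹ ∈ S) : wordLength S s ≤ 1 :=
  wordLength_le_length (w := [s]) (by simpa using hs) List.prod_singleton

theorem wordLength_mul_le (hS : Subgroup.closure S = ⊤) (g h : G) :
    wordLength S (g * h) ≤ wordLength S g + wordLength S h := by
  obtain ⟨v, hv, hvS, rfl⟩ := exists_list_length_eq_wordLength hS g
  obtain ⟨w, hw, hwS, rfl⟩ := exists_list_length_eq_wordLength hS h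
  rw [← hv, ← hw, ← List.length_append, ← List.prod_append]
  exact wordLength_le_length (fun x hx => (List.mem_append.mp hx).elim (hvS x) (hwS x)) rfl

theorem wordLength_inv_le (hS : Subgroup.closure S = ⊤) (g : G) :
    wordLength S g⁻¹ ≤ wordLength S g := by
  obtain ⟨w, hw, hwS, rfl⟩ := exists_list_length_eq_wordLength hS g
  rw [← hw, ← List.length_reverse, ← List.length_map (f := fun x : G => x⁻¹),
    List.prod_inv_reverse, ← List.map_reverse]
  refine wordLength_le_length (fun x hx => ?_) rfl
  obtain ⟨y, hy, rfl⟩ := List.mem_map.mp hx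
  rw [List.mem_reverse] at hy
  simpa [or_comm] using hwS y hy

theorem wordLength_inv (hS : Subgroup.closure S = ⊤) (g : G) :
    wordLength S g⁻¹ = wordLength S g :=
  (wordLength_inv_le hS g).antisymm (by simpa using wordLength_inv_le hS g⁻¹)

theorem wordLength_list_prod_le (hS : Subgroup.closure S = ⊤) {d : ℕ} {w : List G}
    (hw : ∀ x ∈ w, wordLength S x ≤ d) : wordLength S w.prod ≤ d * w.length := by
  induction w with
  | nil => simp [wordLength_one]
  | cons x w ih =>
    rw [List.prod_cons, List.length_cons, mul_add_one, add_comm]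
    exact (wordLength_mul_le hS x w.prod).trans
      (add_le_add (hw x List.mem_cons_self) (ih fun y hy => hw y (List.mem_cons_of_mem x hy)))

theorem wordLength_map_le {L : Type*} [Group L] {T : Set L} (φ : L →* G)
    (hS : Subgroup.closure S = ⊤) (hT : Subgroup.closure T = ⊤) {d : ℕ}
    (hd : ∀ t ∈ T, wordLength S (φ t) ≤ d) (g : L) :
    wordLength S (φ g) ≤ d * wordLength T g := by
  obtain ⟨w, hw, hwT, rfl⟩ := exists_list_length_eq_wordLength hT g
  rw [map_list_prod, ← hw, ← List.length_map φ]
  refine wordLength_list_prod_le hS fun x hx => ?_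
  obtain ⟨y, hy, rfl⟩ := List.mem_map.mp hx
  rcases hwT y hy with hyT | hyT
  · exact hd y hyT
  · simpa [wordLength_inv hS] using hd y⁻¹ hyT

end WordLength

section Growth

variable {S : Set G}

theorem setOf_wordLength_le_add_subset (hS : Subgroup.closure S = ⊤) (m n : ℕ) :
    {g : G | wordLength S g ≤ m + n} ⊆ {g | wordLength S g ≤ m} * {g | wordLength S g ≤ n} := by
  intro g hg
  obtain ⟨w, hw, hwS, rfl⟩ := exists_list_length_eq_wordLength hS g
  refine ⟨(w.take m).prod, ?_, (w.drop m).prod, ?_, List.prod_take_mul_prod_drop w m⟩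
  · exact (wordLength_le_length (fun x hx => hwS x (List.mem_of_mem_take hx)) rfl).trans
      (List.length_take_le _ _)
  · refine (wordLength_le_length (fun x hx => hwS x (List.mem_of_mem_drop hx)) rfl).trans ?_
    have hlen : w.length ≤ m + n := hw ▸ hg
    rw [List.length_drop]
    omega

theorem finite_setOf_wordLength_le (hS : Subgroup.closure S = ⊤) (hSfin : S.Finite) (n : ℕ) :
    {g : G | wordLength S g ≤ n}.Finite := by
  have : Finite ↥(S ∪ S⁻¹) := (hSfin.union hSfin.inv).to_subtype
  refine ((List.finite_length_le _ n).image
    fun w : List ↥(S ∪ S⁻¹) => (w.map Subtype.val).prod).subset ?_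
  intro g hg
  obtain ⟨w, hw, hwS, rfl⟩ := exists_list_length_eq_wordLength hS g
  lift w to List ↥(S ∪ S⁻¹) using hwS
  have hlen : (w.map Subtype.val).length ≤ n := hw ▸ hg
  exact ⟨w, by simpa using hlen, rfl⟩

theorem one_le_ballCard (hS : Subgroup.closure S = ⊤) (hSfin : S.Finite) (n : ℕ) :
    1 ≤ ballCard S n :=
  (Set.ncard_pos (finite_setOf_wordLength_le hS hSfin n)).mpr ⟨1, by simp [wordLength_one]⟩

theorem ballCard_add_le (hS : Subgroup.closure S = ⊤) (hSfin : S.Finite) (m n : ℕ) :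
    ballCard S (m + n) ≤ ballCard S m * ballCard S n := by
  unfold ballCard
  calc _ ≤ ({g : G | wordLength S g ≤ m} * {g | wordLength S g ≤ n}).ncard :=
        Set.ncard_le_ncard (setOf_wordLength_le_add_subset hS m n)
          ((finite_setOf_wordLength_le hS hSfin m).mul (finite_setOf_wordLength_le hS hSfin n))
    _ ≤ _ := by simpa only [Nat.card_coe_set_eq] using Set.natCard_mul_le

theorem tendsto_growthRate (hS : Subgroup.closure S = ⊤) (hSfin : S.Finite) :
    Tendsto (fun n : ℕ => (ballCard S n : ℝ) ^ (n : ℝ)⁻¹) atTop (𝓝 (growthRate S)) := by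
  have hone (n : ℕ) : (1 : ℝ) ≤ ballCard S n := by exact_mod_cast one_le_ballCard hS hSfin n
  have hpos (n : ℕ) : (0 : ℝ) < ballCard S n := zero_lt_one.trans_le (hone n)
  have hsub : Subadditive fun n => Real.log (ballCard S n) := fun m n => by
    rw [← Real.log_mul (hpos m).ne' (hpos n).ne']
    exact Real.log_le_log (hpos _) (by exact_mod_cast ballCard_add_le hS hSfin m n)
  have hbdd : BddBelow (Set.range fun n : ℕ => Real.log (ballCard S n) / n) := by
    refine ⟨0, ?_⟩
    rintro _ ⟨n, rfl⟩
    exact div_nonneg (Real.log_nonneg (hone n)) n.cast_nonneg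
  have hlim : Tendsto (fun n : ℕ => (ballCard S n : ℝ) ^ (n : ℝ)⁻¹) atTop
      (𝓝 (Real.exp hsub.lim)) := by
    simp_rw [Real.rpow_def_of_pos (hpos _), ← div_eq_mul_inv]
    exact (Real.continuous_exp.tendsto _).comp (hsub.tendsto_lim hbdd)
  rwa [growthRate, hlim.limUnder_eq]

theorem one_le_growthRate (hS : Subgroup.closure S = ⊤) (hSfin : S.Finite) :
    1 ≤ growthRate S :=
  ge_of_tendsto' (tendsto_growthRate hS hSfin) fun n =>
    Real.one_le_rpow (by exact_mod_cast one_le_ballCard hS hSfin n) (inv_nonneg.2 n.cast_nonneg)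

variable {L : Type*} [Group L] {T : Set L}

theorem ballCard_le_ballCard_mul_of_map (φ : L →* G) (hφ : Function.Injective φ)
    (hS : Subgroup.closure S = ⊤) (hSfin : S.Finite) (hT : Subgroup.closure T = ⊤) {d : ℕ}
    (hd : ∀ t ∈ T, wordLength S (φ t) ≤ d) (n : ℕ) :
    ballCard T n ≤ ballCard S (d * n) := by
  unfold ballCard
  rw [← Set.ncard_image_of_injective _ hφ]
  refine Set.ncard_le_ncard ?_ (finite_setOf_wordLength_le hS hSfin _)
  rintro _ ⟨g, hg, rfl⟩
  exact (wordLength_map_le φ hS hT hd g).trans (Nat.mul_le_mul_left d hg)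

theorem growthRate_le_pow_of_ballCard_le (hS : Subgroup.closure S = ⊤) (hSfin : S.Finite)
    (hT : Subgroup.closure T = ⊤) (hTfin : T.Finite) {d : ℕ} (hd : 0 < d)
    (hball : ∀ n, ballCard T n ≤ ballCard S (d * n)) :
    growthRate T ≤ growthRate S ^ d := by
  have hSd : Tendsto (fun n : ℕ => ((ballCard S (d * n) : ℝ) ^ ((d * n : ℕ) : ℝ)⁻¹) ^ d) atTop
      (𝓝 (growthRate S ^ d)) :=
    ((tendsto_growthRate hS hSfin).comp (tendsto_id.const_mul_atTop' hd)).pow d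
  refine le_of_tendsto_of_tendsto' (tendsto_growthRate hT hTfin) hSd fun n => ?_
  have hexp : ((d * n : ℕ) : ℝ)⁻¹ * d = (n : ℝ)⁻¹ := by
    rw [Nat.cast_mul, mul_inv, mul_right_comm, inv_mul_cancel₀ (by positivity), one_mul]
  rw [← Real.rpow_mul_natCast (Nat.cast_nonneg _), hexp]
  exact Real.rpow_le_rpow (Nat.cast_nonneg _) (by exact_mod_cast hball n)
    (inv_nonneg.2 n.cast_nonneg)

end Growth

theorem minGrowth_le_growthRate {S : Finset G} (hS : Subgroup.closure (S : Set G) = ⊤) :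
    minGrowth G ≤ growthRate (S : Set G) :=
  csInf_le ⟨1, by rintro _ ⟨T, hT, rfl⟩; exact one_le_growthRate hT T.finite_toSet⟩ ⟨S, hS, rfl⟩

theorem le_minGrowth (hG : Group.FG G) {c : ℝ}
    (hc : ∀ S : Finset G, Subgroup.closure (S : Set G) = ⊤ → c ≤ growthRate (S : Set G)) :
    c ≤ minGrowth G := by
  obtain ⟨⟨S, hS⟩⟩ := hG
  refine le_csInf ⟨_, S, hS, rfl⟩ ?_
  rintro _ ⟨T, hT, rfl⟩
  exact hc T hT

theorem apply_lt_natCard_of_pred_mem_range {α : Type*} [Finite α] (f : α → ℕ)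
    (hf : ∀ a n, f a = n + 1 → n ∈ Set.range f) (a : α) : f a < Nat.card α := by
  have hIic : ∀ m, m ∈ Set.range f → ∀ n ≤ m, n ∈ Set.range f := by
    intro m
    induction m with
    | zero => rintro hm n hn; rwa [Nat.le_zero.mp hn]
    | succ m ih =>
      rintro ⟨b, hb⟩ n hn
      rcases hn.lt_or_eq with hn | rfl
      · exact ih (hf b m hb) n (Nat.lt_succ_iff.mp hn)
      · exact ⟨b, hb⟩
  choose g hg using fun i : Fin (f a + 1) => hIic _ ⟨a, rfl⟩ i (Nat.lt_succ_iff.mp i.2)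
  have hinj : Function.Injective g :=
    Function.Injective.of_comp (f := f) fun i j hij => Fin.ext (by simpa [hg] using hij)
  simpa using Nat.card_le_card_of_injective g hinj

section Coset

variable {S : Set G} {H : Subgroup G}

noncomputable def cosetWordLength (S : Set G) (H : Subgroup G)
    (q : Quotient (QuotientGroup.rightRel H)) : ℕ :=
  sInf (wordLength S '' {g | Quotient.mk'' g = q})

theorem cosetWordLength_le (g : G) :
    cosetWordLength S H (Quotient.mk'' g) ≤ wordLength S g :=
  Nat.sInf_le ⟨g, rfl, rfl⟩

theorem exists_wordLength_eq_cosetWordLength (q : Quotient (QuotientGroup.rightRel H)) :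
    ∃ g, Quotient.mk'' g = q ∧ wordLength S g = cosetWordLength S H q := by
  obtain ⟨g, hg⟩ := Quotient.exists_rep q
  exact Nat.sInf_mem (s := wordLength S '' {g | Quotient.mk'' g = q}) ⟨_, g, hg, rfl⟩

theorem cosetWordLength_pred_mem_range (hS : Subgroup.closure S = ⊤)
    {q : Quotient (QuotientGroup.rightRel H)} {n : ℕ} (hq : cosetWordLength S H q = n + 1) :
    n ∈ Set.range (cosetWordLength S H) := by
  obtain ⟨g, rfl, hg⟩ := exists_wordLength_eq_cosetWordLength (S := S) q
  obtain ⟨w, hw, hwS, rfl⟩ := exists_list_length_eq_wordLength hS g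
  obtain ⟨u, s, rfl⟩ : ∃ (u : List G) (s : G), w = u.concat s := by
    rcases List.eq_nil_or_concat w with rfl | hus
    · simp_all
    · exact hus
  have hu : u.length = n := by simp_all
  have hs : wordLength S s ≤ 1 := wordLength_le_one (hwS s (by simp))
  refine ⟨Quotient.mk'' u.prod, le_antisymm ?_ ?_⟩
  · exact hu ▸ (cosetWordLength_le u.prod).trans
      (wordLength_le_length (fun x hx => hwS x (by simp [hx])) rfl)
  · obtain ⟨g', hg'u, hg'⟩ := exists_wordLength_eq_cosetWordLength (S := S) (Quotient.mk'' u.prod)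
    have hcoset : Quotient.mk'' (g' * s) = (Quotient.mk'' (u.concat s).prod :
        Quotient (QuotientGroup.rightRel H)) := by
      rw [Quotient.eq'', QuotientGroup.rightRel_apply, List.prod_concat,
        show u.prod * s * (g' * s)⁻¹ = u.prod * g'⁻¹ by group]
      exact QuotientGroup.rightRel_apply.mp (Quotient.eq''.mp hg'u)
    have := (cosetWordLength_le (H := H) (g' * s)).trans (wordLength_mul_le hS g' s)
    rw [hcoset, hq, hg'] at this
    omega

theorem cosetWordLength_lt_index (hS : Subgroup.closure S = ⊤) [H.FiniteIndex]
    (q : Quotient (QuotientGroup.rightRel H)) : cosetWordLength S H q < H.index := by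
  have hcard : Nat.card (Quotient (QuotientGroup.rightRel H)) = H.index :=
    (Nat.card_congr (QuotientGroup.quotientRightRelEquivQuotientLeftRel H)).trans
      H.index_eq_card.symm
  have : Finite (Quotient (QuotientGroup.rightRel H)) :=
    Finite.of_equiv _ (QuotientGroup.quotientRightRelEquivQuotientLeftRel H).symm
  exact hcard ▸ apply_lt_natCard_of_pred_mem_range _
    (fun _ _ hq => cosetWordLength_pred_mem_range hS hq) q

theorem exists_isComplement_wordLength_lt_index (hS : Subgroup.closure S = ⊤) [H.FiniteIndex] :
    ∃ R : Set G, Subgroup.IsComplement (H : Set G) R ∧ (1 : G) ∈ R ∧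
      ∀ r ∈ R, wordLength S r < H.index := by
  choose f hf hlen using exists_wordLength_eq_cosetWordLength (S := S) (H := H)
  refine ⟨Set.range f, Subgroup.isComplement_range_right hf, ⟨Quotient.mk'' 1, ?_⟩, ?_⟩
  · refine eq_one_of_wordLength_eq_zero hS (Nat.le_zero.mp ?_)
    exact hlen _ ▸ (cosetWordLength_le 1).trans wordLength_one.le
  · rintro _ ⟨q, rfl⟩
    exact hlen q ▸ cosetWordLength_lt_index hS q

theorem exists_finset_closure_eq_top_wordLength_le (hS : Subgroup.closure S = ⊤)
    (hSfin : S.Finite) [H.FiniteIndex] :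
    ∃ T : Finset H, Subgroup.closure (T : Set H) = ⊤ ∧
      ∀ t ∈ T, wordLength S (t : G) ≤ 2 * H.index := by
  obtain ⟨R, hR, hR1, hRlen⟩ := exists_isComplement_wordLength_lt_index hS (H := H)
  have hfin : {t : H | wordLength S (t : G) ≤ 2 * H.index}.Finite :=
    (finite_setOf_wordLength_le hS hSfin _).preimage Subtype.val_injective.injOn
  refine ⟨hfin.toFinset, ?_, fun t ht => hfin.mem_toFinset.mp ht⟩
  rw [hfin.coe_toFinset, eq_top_iff, ← Subgroup.closure_mul_image_eq_top hR hR1 hS]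
  refine Subgroup.closure_mono ?_
  rintro _ ⟨_, ⟨r, hr, s, hs, rfl⟩, rfl⟩
  have h1 := wordLength_mul_le hS (r * s) (hR.toRightFun (r * s))⁻¹
  have h2 := wordLength_mul_le hS r s
  have h3 := wordLength_le_one (S := S) (Or.inl hs)
  have h4 := hRlen r hr
  have h5 := hRlen _ (hR.toRightFun (r * s)).2
  rw [wordLength_inv hS] at h1
  simp only [Set.mem_ofPred_eq]
  omega

end Coset

theorem minGrowth_le_growthRate_pow {H : Subgroup G} [H.FiniteIndex] {S : Finset G}
    (hS : Subgroup.closure (S : Set G) = ⊤) :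
    minGrowth H ≤ growthRate (S : Set G) ^ (2 * H.index) := by
  obtain ⟨T, hT, hTS⟩ := exists_finset_closure_eq_top_wordLength_le hS S.finite_toSet (H := H)
  have hd : 0 < 2 * H.index := by have := H.index_ne_zero_of_finite; omega
  calc minGrowth H ≤ growthRate (T : Set H) := minGrowth_le_growthRate hT
    _ ≤ _ := growthRate_le_pow_of_ballCard_le hS S.finite_toSet hT T.finite_toSet hd
        (ballCard_le_ballCard_mul_of_map H.subtype Subtype.val_injective hS S.finite_toSet hT hTS)

/-- a finitely generated group with a finite-index subgroup of uniformly
exponential growth has uniformly exponential growth. -/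
theorem uniform_growth_of_finiteIndex_subgroup {G : Type*} [Group G]
    (hG : Group.FG G) (H : Subgroup G) (hH : H.FiniteIndex)
    (h : 1 < minGrowth H) : 1 < minGrowth G := by
  have hd : (0 : ℝ) < (2 * H.index : ℕ) := by have := hH.index_ne_zero; positivity
  calc 1 < minGrowth H ^ ((2 * H.index : ℕ) : ℝ)⁻¹ := Real.one_lt_rpow h (inv_pos.2 hd)
    _ ≤ minGrowth G := le_minGrowth hG fun S hS => by
      rw [Real.rpow_inv_le_iff_of_pos (by linarith)
        (zero_le_one.trans (one_le_growthRate hS S.finite_toSet)) hd, Real.rpow_natCast]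
      exact minGrowth_le_growthRate_pow hS
end

section
/- For every n ≥ 2, the natural group homomorphism from Aut(F_n), the automorphism group of the free group F_n of rank n, to GL(n,ℤ), induced by the action of automorphisms on the abelianization F_n/[F_n,F_n] ≅ ℤ^n, is surjective. -/
/-!
Exponent sums of `f w` are obtained from those of `w` through the exponent-sum matrix of `f`, so
taking this matrix is multiplicative. The image of `Aut(Fₙ)` contains every transvection
(`xⱼ ↦ xⱼ xᵢᶜ`) and every diagonal sign matrix (`xₖ ↦ xₖ^±1`), and these generate `GL(n, ℤ)`:
row operations make the columns equal to those of the identity one at a time. For the next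
column `k`, Euclid's algorithm clears its entries in the unfinished rows other than `k` (adding
multiples of unfinished rows does not disturb finished columns); invertibility then makes the
`(k, k)` entry a unit `±1`, a sign matrix turns it into `1`, and adding multiples of row `k`
clears the rest of the column.
-/

namespace Matrix.GeneralLinearGroup

open Finset

variable {ι R : Type*} [Fintype ι] [DecidableEq ι] [CommRing R]

def transvection {i j : ι} (hij : i ≠ j) (c : R) : GL ι R :=
  SpecialLinearGroup.toGL (SpecialLinearGroup.transvection hij c)

@[simp]
lemma val_transvection {i j : ι} (hij : i ≠ j) (c : R) :
    (transvection hij c : Matrix ι ι R) = Matrix.transvection i j c := rfl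

def diagonalUnits : (ι → Rˣ) →* GL ι R :=
  (Units.map (diagonalRingHom ι R).toMonoidHom).comp MulEquiv.piUnits.symm.toMonoidHom

@[simp]
lemma val_diagonalUnits (ε : ι → Rˣ) :
    (diagonalUnits ε : Matrix ι ι R) = diagonal fun i => (ε i : R) := rfl

variable (ι R) in
def elementarySubgroup : Subgroup (GL ι R) :=
  Subgroup.closure ({g | ∃ (i j : ι) (hij : i ≠ j) (c : R), g = transvection hij c} ∪
    Set.range diagonalUnits)

lemma transvection_mem_elementarySubgroup {i j : ι} (hij : i ≠ j) (c : R) :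
    transvection hij c ∈ elementarySubgroup ι R :=
  Subgroup.subset_closure (Or.inl ⟨i, j, hij, c, rfl⟩)

lemma diagonalUnits_mem_elementarySubgroup (ε : ι → Rˣ) :
    diagonalUnits ε ∈ elementarySubgroup ι R :=
  Subgroup.subset_closure (Or.inr ⟨ε, rfl⟩)

def EqOneOnCols (S : Finset ι) (g : GL ι R) : Prop :=
  ∀ l ∈ S, ∀ i, (g : Matrix ι ι R) i l = (1 : Matrix ι ι R) i l

lemma EqOneOnCols.transvection_mul {S : Finset ι} {g : GL ι R} (hg : EqOneOnCols S g)
    {i j : ι} (hij : i ≠ j) (hj : j ∉ S) (c : R) :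
    EqOneOnCols S (transvection hij c * g) := by
  intro l hl a
  have hjl : (g : Matrix ι ι R) j l = 0 := by
    rw [hg l hl, one_apply_ne (ne_of_mem_of_not_mem hl hj).symm]
  rw [Units.val_mul, val_transvection]
  rcases eq_or_ne a i with rfl | hai
  · rw [transvection_mul_apply_same, hjl, mul_zero, add_zero, hg l hl]
  · rw [transvection_mul_apply_of_ne i j a l hai, hg l hl]

lemma EqOneOnCols.diagonalUnits_mul {S : Finset ι} {g : GL ι R} (hg : EqOneOnCols S g)
    {ε : ι → Rˣ} (hε : ∀ l ∈ S, ε l = 1) :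
    EqOneOnCols S (diagonalUnits ε * g) := by
  intro l hl a
  rw [Units.val_mul, val_diagonalUnits, diagonal_mul, hg l hl]
  rcases eq_or_ne a l with rfl | hal
  · simp [hε a hl]
  · simp [one_apply_ne hal]

lemma EqOneOnCols.isUnit_apply_self {S : Finset ι} {g : GL ι R} (hg : EqOneOnCols S g)
    {k : ι} (hk : k ∉ S) (hcol : ∀ i ∉ S, i ≠ k → (g : Matrix ι ι R) i k = 0) :
    IsUnit ((g : Matrix ι ι R) k k) := by
  set A := ((g⁻¹ : GL ι R) : Matrix ι ι R)
  have hAg : A * g = 1 := by rw [← Units.val_mul, inv_mul_cancel, Units.val_one]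
  have hA (l : ι) (hl : l ∈ S) : A k l = 0 := by
    have hAl : (A * g) k l = (A * (1 : Matrix ι ι R)) k l := by simp only [mul_apply, hg l hl]
    rw [hAg, Matrix.mul_one, one_apply_ne (ne_of_mem_of_not_mem hl hk).symm] at hAl
    exact hAl.symm
  refine IsUnit.of_mul_eq_one_right (A k k) ?_
  rw [← one_apply_eq (α := R) k, ← hAg, mul_apply, Finset.sum_eq_single k]
  · intro m _ hmk
    by_cases hm : m ∈ S
    · rw [hA m hm, zero_mul]
    · rw [hcol m hm hmk, mul_zero]
  · simp

lemma exists_mul_forall_apply_eq_zero {H : Subgroup (GL ι R)} {P : GL ι R → Prop} {k : ι}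
    {T : Finset ι} (hkT : k ∉ T)
    (hstep : ∀ g, P g → ∀ p ∈ T, ∃ h ∈ H, P (h * g) ∧ ((h * g : GL ι R) : Matrix ι ι R) p k = 0 ∧
      ∀ i, i ≠ k → i ≠ p → ((h * g : GL ι R) : Matrix ι ι R) i k = (g : Matrix ι ι R) i k)
    (g : GL ι R) (hg : P g) :
    ∃ h ∈ H, P (h * g) ∧ ∀ i ∈ T, ((h * g : GL ι R) : Matrix ι ι R) i k = 0 := by
  induction T using Finset.induction_on with
  | empty => exact ⟨1, one_mem H, by rwa [one_mul], by simp⟩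
  | insert a T haT ih =>
    obtain ⟨h, hh, hPh, hzero⟩ :=
      ih (fun hk => hkT (mem_insert_of_mem hk)) fun g hg p hp => hstep g hg p (mem_insert_of_mem hp)
    obtain ⟨h', hh', hPh', ha, hrest⟩ := hstep (h * g) hPh a (mem_insert_self a T)
    refine ⟨h' * h, mul_mem hh' hh, by rwa [mul_assoc], fun i hi => ?_⟩
    rw [mul_assoc]
    rcases mem_insert.1 hi with rfl | hi
    · exact ha
    · rw [hrest i (ne_of_mem_of_not_mem hi (fun hk => hkT (mem_insert_of_mem hk)))
        (ne_of_mem_of_not_mem hi haT), hzero i hi]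

lemma EqOneOnCols.exists_mul_insert_of_apply_self_eq_one {S : Finset ι} {g : GL ι R}
    (hg : EqOneOnCols S g) {k : ι} (hk : k ∉ S) (hkk : (g : Matrix ι ι R) k k = 1) :
    ∃ h ∈ elementarySubgroup ι R, EqOneOnCols (insert k S) (h * g) := by
  obtain ⟨h, hh, ⟨hgS, hgk⟩, hzero⟩ :=
    exists_mul_forall_apply_eq_zero (H := elementarySubgroup ι R)
      (P := fun g => EqOneOnCols S g ∧ (g : Matrix ι ι R) k k = 1) (T := univ.erase k)
      (notMem_erase k univ)
      (fun g ⟨hg, hkk⟩ p hp => by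
        have hpk : p ≠ k := ne_of_mem_erase hp
        refine ⟨transvection hpk (-(g : Matrix ι ι R) p k),
          transvection_mem_elementarySubgroup hpk _, ⟨hg.transvection_mul hpk hk _, ?_⟩, ?_, ?_⟩
        · rw [Units.val_mul, val_transvection, transvection_mul_apply_of_ne p k k k hpk.symm, hkk]
        · rw [Units.val_mul, val_transvection, transvection_mul_apply_same, hkk]
          ring
        · intro i _ hip
          rw [Units.val_mul, val_transvection, transvection_mul_apply_of_ne p k i k hip])
      g ⟨hg, hkk⟩
  refine ⟨h, hh, fun l hl i => ?_⟩
  rcases mem_insert.1 hl with rfl | hl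
  · rcases eq_or_ne i l with rfl | hil
    · rw [hgk, one_apply_eq]
    · rw [hzero i (mem_erase.2 ⟨hil, mem_univ i⟩), one_apply_ne hil]
  · exact hgS l hl i

-- With `q = a / b` it turns the entries `a, b` of rows `k, p` into `b, -(a % b)`.
def euclidStep {k p : ι} (hkp : k ≠ p) (q : R) : GL ι R :=
  transvection hkp 1 * transvection hkp.symm (-1) * transvection hkp (1 - q)

lemma euclidStep_mem_elementarySubgroup {k p : ι} (hkp : k ≠ p) (q : R) :
    euclidStep hkp q ∈ elementarySubgroup ι R :=
  mul_mem (mul_mem (transvection_mem_elementarySubgroup _ _)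
    (transvection_mem_elementarySubgroup _ _)) (transvection_mem_elementarySubgroup _ _)

lemma val_euclidStep_mul_apply {k p : ι} (hkp : k ≠ p) (q : R) (g : GL ι R) (i b : ι) :
    ((euclidStep hkp q * g : GL ι R) : Matrix ι ι R) i b =
      if i = k then (g : Matrix ι ι R) p b
      else if i = p then q * (g : Matrix ι ι R) p b - (g : Matrix ι ι R) k b
      else (g : Matrix ι ι R) i b := by
  simp only [euclidStep, Units.val_mul, val_transvection, Matrix.mul_assoc]
  rcases eq_or_ne i k with rfl | hik
  · simp [hkp, hkp.symm]
    ring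
  rcases eq_or_ne i p with rfl | hip
  · simp [hkp.symm]
    ring
  · simp [hik, hip]

lemma EqOneOnCols.euclidStep_mul {S : Finset ι} {g : GL ι R} (hg : EqOneOnCols S g)
    {k p : ι} (hkp : k ≠ p) (hk : k ∉ S) (hp : p ∉ S) (q : R) :
    EqOneOnCols S (euclidStep hkp q * g) := by
  simp only [euclidStep, mul_assoc]
  exact ((hg.transvection_mul hkp hp _).transvection_mul hkp.symm hk _).transvection_mul hkp hp _

lemma EqOneOnCols.exists_mul_apply_eq_zero {S : Finset ι} {g : GL ι ℤ} (hg : EqOneOnCols S g)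
    {k p : ι} (hkp : k ≠ p) (hk : k ∉ S) (hp : p ∉ S) :
    ∃ h ∈ elementarySubgroup ι ℤ, EqOneOnCols S (h * g) ∧
      ((h * g : GL ι ℤ) : Matrix ι ι ℤ) p k = 0 ∧
      ∀ i, i ≠ k → i ≠ p → ((h * g : GL ι ℤ) : Matrix ι ι ℤ) i k = (g : Matrix ι ι ℤ) i k := by
  by_cases hpk : (g : Matrix ι ι ℤ) p k = 0
  · exact ⟨1, one_mem _, by rwa [one_mul], by rwa [one_mul], by simp⟩
  set h₀ := euclidStep hkp ((g : Matrix ι ι ℤ) k k / (g : Matrix ι ι ℤ) p k)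
  have hdecr : ((h₀ * g : GL ι ℤ) : Matrix ι ι ℤ) p k =
      -((g : Matrix ι ι ℤ) k k % (g : Matrix ι ι ℤ) p k) := by
    rw [val_euclidStep_mul_apply, if_neg hkp.symm, if_pos rfl, Int.emod_def]
    ring
  obtain ⟨h, hh, hgS, hzero, hrest⟩ :=
    (hg.euclidStep_mul hkp hk hp _).exists_mul_apply_eq_zero hkp hk hp
  refine ⟨h * h₀, mul_mem hh (euclidStep_mem_elementarySubgroup _ _), by rwa [mul_assoc],
    by rwa [mul_assoc], fun i hik hip => ?_⟩
  rw [mul_assoc, hrest i hik hip, val_euclidStep_mul_apply, if_neg hik, if_neg hip]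
termination_by ((g : Matrix ι ι ℤ) p k).natAbs
decreasing_by
  rw [hdecr, Int.natAbs_neg]
  zify
  rw [abs_of_nonneg (Int.emod_nonneg _ hpk)]
  exact Int.emod_lt_abs _ hpk

lemma EqOneOnCols.exists_mul_insert {S : Finset ι} {g : GL ι ℤ} (hg : EqOneOnCols S g)
    {k : ι} (hk : k ∉ S) :
    ∃ h ∈ elementarySubgroup ι ℤ, EqOneOnCols (insert k S) (h * g) := by
  obtain ⟨h₁, hh₁, hg₁, hzero⟩ :=
    exists_mul_forall_apply_eq_zero (H := elementarySubgroup ι ℤ) (P := EqOneOnCols S)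
      (T := Sᶜ.erase k) (notMem_erase k _)
      (fun g hg p hp => hg.exists_mul_apply_eq_zero (ne_of_mem_erase hp).symm hk
        (mem_compl.1 (mem_of_mem_erase hp)))
      g hg
  obtain ⟨u, hu⟩ := hg₁.isUnit_apply_self hk fun i hi hik =>
    hzero i (mem_erase.2 ⟨hik, mem_compl.2 hi⟩)
  set h₂ := diagonalUnits (Function.update 1 k u⁻¹)
  have hkk : ((h₂ * (h₁ * g) : GL ι ℤ) : Matrix ι ι ℤ) k k = 1 := by
    rw [Units.val_mul, val_diagonalUnits, diagonal_mul, Function.update_self, ← hu,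
      Units.inv_mul]
  obtain ⟨h₃, hh₃, hg₃⟩ := (hg₁.diagonalUnits_mul fun l hl =>
    Function.update_of_ne (ne_of_mem_of_not_mem hl hk) _ _).exists_mul_insert_of_apply_self_eq_one
      hk hkk
  exact ⟨h₃ * h₂ * h₁, mul_mem (mul_mem hh₃ (diagonalUnits_mem_elementarySubgroup _)) hh₁,
    by simpa only [mul_assoc] using hg₃⟩

lemma exists_mul_eqOneOnCols (g : GL ι ℤ) (S : Finset ι) :
    ∃ h ∈ elementarySubgroup ι ℤ, EqOneOnCols S (h * g) := by
  induction S using Finset.induction_on with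
  | empty => exact ⟨1, one_mem _, fun l hl => absurd hl (notMem_empty l)⟩
  | insert k S hk ih =>
    obtain ⟨h, hh, hg⟩ := ih
    obtain ⟨h', hh', hg'⟩ := hg.exists_mul_insert hk
    exact ⟨h' * h, mul_mem hh' hh, by rwa [mul_assoc]⟩

theorem elementarySubgroup_int_eq_top : elementarySubgroup ι ℤ = ⊤ := by
  refine eq_top_iff.2 fun g _ => ?_
  obtain ⟨h, hh, hg⟩ := exists_mul_eqOneOnCols g univ
  have hhg : h * g = 1 := Units.ext <| Matrix.ext fun i l => hg l (mem_univ l) i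
  rw [eq_inv_of_mul_eq_one_right hhg]
  exact inv_mem hh

end Matrix.GeneralLinearGroup

namespace FreeGroup

open Matrix.GeneralLinearGroup

variable {ι : Type*}

def powEnd (ε : ι → ℤ) : FreeGroup ι →* FreeGroup ι :=
  FreeGroup.lift fun k => of k ^ ε k

lemma powEnd_comp (ε δ : ι → ℤ) : (powEnd ε).comp (powEnd δ) = powEnd (ε * δ) := by
  ext k
  simp [powEnd, ← _root_.zpow_mul]

lemma powEnd_one : powEnd (1 : ι → ℤ) = MonoidHom.id _ := by
  ext k
  simp [powEnd]

def diagonalAut (ε : ι → ℤˣ) : MulAut (FreeGroup ι) :=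
  have hε : (powEnd fun k => (ε k : ℤ)).comp (powEnd fun k => (ε k : ℤ)) = MonoidHom.id _ := by
    rw [powEnd_comp, ← powEnd_one]
    congr 1
    ext k
    simp [← Units.val_mul, Int.units_mul_self]
  MonoidHom.toMulEquiv _ _ hε hε

variable [DecidableEq ι]

def transvectionEnd (i j : ι) (c : ℤ) : FreeGroup ι →* FreeGroup ι :=
  FreeGroup.lift (Function.update of j (of j * of i ^ c))

lemma transvectionEnd_comp {i j : ι} (hij : i ≠ j) (c d : ℤ) :
    (transvectionEnd i j c).comp (transvectionEnd i j d) = transvectionEnd i j (c + d) := by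
  ext k
  rcases eq_or_ne k j with rfl | hk
  · simp [transvectionEnd, hij, mul_assoc, _root_.zpow_add]
  · simp [transvectionEnd, hk]

lemma transvectionEnd_zero (i j : ι) : transvectionEnd i j 0 = MonoidHom.id _ := by
  ext k
  rcases eq_or_ne k j with rfl | hk <;> simp [transvectionEnd, *]

def transvectionAut {i j : ι} (hij : i ≠ j) (c : ℤ) : MulAut (FreeGroup ι) :=
  MonoidHom.toMulEquiv (transvectionEnd i j c) (transvectionEnd i j (-c))
    (by rw [transvectionEnd_comp hij, neg_add_cancel, transvectionEnd_zero])
    (by rw [transvectionEnd_comp hij, add_neg_cancel, transvectionEnd_zero])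

def exponentSum (i : ι) : FreeGroup ι →* Multiplicative ℤ :=
  FreeGroup.lift fun k => Multiplicative.ofAdd (if k = i then 1 else 0)

@[simp]
lemma toAdd_exponentSum_of (i k : ι) :
    (exponentSum i (of k)).toAdd = if k = i then 1 else 0 := by
  simp [exponentSum]

def abelianizationMatrix (f : FreeGroup ι →* FreeGroup ι) : Matrix ι ι ℤ :=
  Matrix.of fun i j => (exponentSum i (f (of j))).toAdd

lemma abelianizationMatrix_id : abelianizationMatrix (MonoidHom.id (FreeGroup ι)) = 1 := by
  ext i j
  simp [abelianizationMatrix, Matrix.one_apply, eq_comm]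

variable [Fintype ι]

lemma toAdd_exponentSum_apply (f : FreeGroup ι →* FreeGroup ι) (i : ι) (w : FreeGroup ι) :
    (exponentSum i (f w)).toAdd =
      ∑ k, abelianizationMatrix f i k * (exponentSum k w).toAdd := by
  induction w using FreeGroup.induction_on with
  | C1 => simp
  | of k => simp [abelianizationMatrix]
  | inv_of k ih => simp_all
  | mul v w hv hw => simp_all [mul_add, Finset.sum_add_distrib]

lemma abelianizationMatrix_comp (f g : FreeGroup ι →* FreeGroup ι) :
    abelianizationMatrix (f.comp g) = abelianizationMatrix f * abelianizationMatrix g := by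
  ext i j
  exact toAdd_exponentSum_apply f i (g (of j))

def mulAutToGL : MulAut (FreeGroup ι) →* GL ι ℤ :=
  MonoidHom.toHomUnits
    { toFun := fun φ => abelianizationMatrix φ.toMonoidHom
      map_one' := abelianizationMatrix_id
      map_mul' := fun φ ψ => abelianizationMatrix_comp φ.toMonoidHom ψ.toMonoidHom }

lemma mulAutToGL_transvectionAut {i j : ι} (hij : i ≠ j) (c : ℤ) :
    mulAutToGL (transvectionAut hij c) = transvection hij c := by
  ext a b
  rcases eq_or_ne b j with rfl | hb
  · simp [mulAutToGL, abelianizationMatrix, transvectionAut, transvectionEnd,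
      Matrix.transvection, Matrix.one_apply, Matrix.single_apply, eq_comm]
  · simp [mulAutToGL, abelianizationMatrix, transvectionAut, transvectionEnd,
      Matrix.transvection, Matrix.one_apply, hb, hb.symm, eq_comm]

lemma mulAutToGL_diagonalAut (ε : ι → ℤˣ) : mulAutToGL (diagonalAut ε) = diagonalUnits ε := by
  ext a b
  rcases eq_or_ne a b with rfl | hab
  · simp [mulAutToGL, abelianizationMatrix, diagonalAut, powEnd]
  · simp [mulAutToGL, abelianizationMatrix, diagonalAut, powEnd, hab, hab.symm]

theorem mulAutToGL_surjective : Function.Surjective (mulAutToGL (ι := ι)) := by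
  rw [← MonoidHom.range_eq_top, eq_top_iff, ← elementarySubgroup_int_eq_top, elementarySubgroup,
    Subgroup.closure_le]
  rintro g (⟨i, j, hij, c, rfl⟩ | ⟨ε, rfl⟩)
  · exact ⟨transvectionAut hij c, mulAutToGL_transvectionAut hij c⟩
  · exact ⟨diagonalAut ε, mulAutToGL_diagonalAut ε⟩

end FreeGroup

theorem aut_freeGroup_to_glnz_surjective_general (n : ℕ) :
    ∃ ρ : MulAut (FreeGroup (Fin n)) →* GL (Fin n) ℤ,
      (∀ (φ : MulAut (FreeGroup (Fin n))) (i j : Fin n),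
        ((ρ φ : GL (Fin n) ℤ) : Matrix (Fin n) (Fin n) ℤ) i j =
          Multiplicative.toAdd ((FreeGroup.lift
            (fun k : Fin n => Multiplicative.ofAdd (if k = i then (1 : ℤ) else 0)))
            (φ (FreeGroup.of j)))) ∧
      Function.Surjective ρ :=
  ⟨FreeGroup.mulAutToGL, fun _ _ _ => rfl, FreeGroup.mulAutToGL_surjective⟩

/-- for `n ≥ 2`, the natural homomorphism `Aut(Fₙ) → GL(n,ℤ)` induced by
the action of automorphisms on the abelianization `Fₙ/[Fₙ,Fₙ] ≅ ℤⁿ` is surjective.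
The natural homomorphism is characterized by the property that the `(i,j)` entry of the
matrix of `φ` is the exponent sum of the `i`-th generator in the word `φ(xⱼ)`. -/
theorem aut_freeGroup_to_glnz_surjective (n : ℕ) (hn : 2 ≤ n) :
    ∃ ρ : MulAut (FreeGroup (Fin n)) →* GL (Fin n) ℤ,
      (∀ (φ : MulAut (FreeGroup (Fin n))) (i j : Fin n),
        ((ρ φ : GL (Fin n) ℤ) : Matrix (Fin n) (Fin n) ℤ) i j =
          Multiplicative.toAdd ((FreeGroup.lift
            (fun k : Fin n => Multiplicative.ofAdd (if k = i then (1 : ℤ) else 0)))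
            (φ (FreeGroup.of j)))) ∧
      Function.Surjective ρ :=
  aut_freeGroup_to_glnz_surjective_general n
end
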